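/- arXiv:1105.6047 — 2 statements merged into one kernel-verified Lean document; each statement's English description precedes it below -/
import Mathlib

section
/- The rate function J^∞(φ) = sup_d I_d(p_d(φ)) diverges whenever φ ∉ Γ*. For φ ∈ Γ*, the limit lim_{d→∞} L_d(p_d(φ(t))) exists for almost every t ∈ [0,1] (the term in the limit being nondecreasing in d), and J^∞(φ) = ∫_0^1 lim_{d→∞} L_d(p_d(φ(t))) dt. -/
open MeasureTheory Real Set Filter Topology
open scoped ENNReal

noncomputable section

attribute [local instance] Classical.propDecidable

/-! ## Basic setting -/

abbrev I01 : Set ℝ := Set.Icc (0:ℝ) 1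

def pt0 : I01 := ⟨0, Set.left_mem_Icc.mpr zero_le_one⟩

/-- Piecewise continuity on `[0,1]`: continuity off finitely many points. -/
def PiecewiseContinuousOn01 (f : ℝ → ℝ) : Prop :=
  ∃ D : Finset ℝ, ∀ t ∈ Set.Icc (0:ℝ) 1, t ∉ D → ContinuousWithinAt f (Set.Icc (0:ℝ) 1) t

/-- Piecewise continuity on `[0,∞)`. -/
def PiecewiseContinuousOnIci (f : ℝ → ℝ) : Prop :=
  ∃ D : Set ℝ, (∀ T > (0:ℝ), (D ∩ Set.Icc 0 T).Finite) ∧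
    ∀ t ∈ Set.Ici (0:ℝ), t ∉ D → ContinuousWithinAt f (Set.Ici (0:ℝ)) t

/-- Assumption (ND) on the time-dependent parameters `p, β`. -/
structure ND (p β : ℝ → ℝ) (p0 β0 β1 : ℝ) : Prop where
  p_nonneg : ∀ t ∈ Set.Icc (0:ℝ) 1, 0 ≤ p t
  p_le : ∀ t ∈ Set.Icc (0:ℝ) 1, p t ≤ p0
  p0_lt_one : p0 < 1
  β_lb : ∀ t ∈ Set.Icc (0:ℝ) 1, β0 ≤ β t
  β_ub : ∀ t ∈ Set.Icc (0:ℝ) 1, β t ≤ β1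
  β0_pos : 0 < β0
  p_pc : PiecewiseContinuousOn01 p
  β_pc : PiecewiseContinuousOn01 β

/-- Assumption (ND), extended to `[0,∞)`. -/
structure NDIci (p β : ℝ → ℝ) (p0 β0 β1 : ℝ) : Prop where
  p_nonneg : ∀ t ∈ Set.Ici (0:ℝ), 0 ≤ p t
  p_le : ∀ t ∈ Set.Ici (0:ℝ), p t ≤ p0
  p0_lt_one : p0 < 1
  β_lb : ∀ t ∈ Set.Ici (0:ℝ), β0 ≤ β t
  β_ub : ∀ t ∈ Set.Ici (0:ℝ), β t ≤ β1
  β0_pos : 0 < β0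
  p_pc : PiecewiseContinuousOnIci p
  β_pc : PiecewiseContinuousOnIci β

/-- The limiting initial data `(c_i)`, `c = Σ_i c_i`, `c̃ = Σ_i i c_i` of assumption (LIM). -/
structure LIMc (c : ℕ → ℝ) (cc ctil : ℝ) : Prop where
  nonneg : ∀ i, 0 ≤ c i
  summable : Summable c
  cc_eq : cc = ∑' i, c i
  mul_summable : Summable (fun i : ℕ => (i : ℝ) * c i)
  ctil_eq : ctil = ∑' i : ℕ, (i : ℝ) * c i

/-- Assumption (LIM) for the array of initial urn configurations `init n i = Z_i^n(0)`. -/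
structure LIM (init : ℕ → ℕ → ℕ) (c : ℕ → ℝ) (cc ctil : ℝ) : Prop where
  c_lim : ∀ i, Tendsto (fun n : ℕ => (init n i : ℝ) / n) atTop (𝓝 (c i))
  ctil_lim : Tendsto (fun n : ℕ => ∑' i : ℕ, (i : ℝ) * (init n i : ℝ) / n) atTop (𝓝 ctil)
  ctil_eq : ctil = ∑' i : ℕ, (i : ℝ) * c i
  mul_summable : Summable (fun i : ℕ => (i : ℝ) * c i)
  c_summable : Summable c
  cc_eq : cc = ∑' i, c i
  finite_support : ∀ n, ∃ K, ∀ k, K ≤ k → init n k = 0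

/-- The total-weight normalization `σ(t) = (1+β(t))t + c̃ + cβ(t)`. -/
def sigf (β : ℝ → ℝ) (cc ctil t : ℝ) : ℝ := (1 + β t) * t + ctil + cc * β t

/-- The truncated initial vector `c^d = (c_0, …, c_d, Σ_{i>d} c_i)`. -/
def cvec (d : ℕ) (c : ℕ → ℝ) : Fin (d+2) → ℝ :=
  fun i => if (i : ℕ) ≤ d then c i else ∑' k : ℕ, c (k + (d+1))

/-- View a vector in `ℝ^{d+2}` as an `ℕ`-indexed sequence (zero for large indices). -/
def toN {d : ℕ} (g : Fin (d+2) → ℝ) : ℕ → ℝ := fun i => if h : i < d+2 then g ⟨i, h⟩ else 0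

/-- `ℕ`-indexed version of `c^d`. -/
def cvecN (d : ℕ) (c : ℕ → ℝ) : ℕ → ℝ := toN (cvec d c)

/-- Extension of a path on `[0,1]` to all of `ℝ` (constant outside `[0,1]`). -/
def pext {d : ℕ} (φ : C(I01, Fin (d+2) → ℝ)) : ℝ → Fin (d+2) → ℝ :=
  fun t => φ (Set.projIcc 0 1 zero_le_one t)

/-- Coordinatewise derivative of a path. -/
def pderivC {d : ℕ} (φ : C(I01, Fin (d+2) → ℝ)) (t : ℝ) (i : Fin (d+2)) : ℝ :=
  deriv (fun s => pext φ s i) t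

def xofN {d : ℕ} (φ : C(I01, Fin (d+2) → ℝ)) (t : ℝ) : ℕ → ℝ := toN (pext φ t)

def vofN {d : ℕ} (φ : C(I01, Fin (d+2) → ℝ)) (t : ℝ) : ℕ → ℝ := toN (fun i => pderivC φ t i)

/-! ## The rate function integrand, with the conventions `0·log 0 = 0/0 = 0`, `1/0 = ∞` -/

/-- `a log(a/b)` as an extended real, with the conventions `0 log 0 = 0·(0/0) = 0` and
`a log(a/0) = ∞` for `a ≠ 0`. -/
def entTerm (a b : ℝ) : EReal :=
  if a = 0 then (0 : EReal) else if b ≤ 0 then (⊤ : EReal)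
  else ((a * Real.log (a / b) : ℝ) : EReal)

/-- `1 - [v]_i`, the numerator attached to the increment `f_i`. -/
def numA (v : ℕ → ℝ) (i : ℕ) : ℝ := 1 - ∑ l ∈ Finset.range (i+1), v l

/-- `1 - Σ_{i=0}^d (1-[v]_i)`, the numerator attached to the increment `f_{d+1}`. -/
def numALast (v : ℕ → ℝ) (d : ℕ) : ℝ := 1 - ∑ i ∈ Finset.range (d+1), numA v i

/-- The natural increment probabilities `u_i`, `0 ≤ i ≤ d`. -/
def denB (p β : ℝ → ℝ) (cc ctil : ℝ) (t : ℝ) (x : ℕ → ℝ) (i : ℕ) : ℝ :=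
  if i = 0 then p t + (1 - p t) * (β t * x 0 / sigf β cc ctil t)
  else (1 - p t) * (((i : ℝ) + β t) * x i / sigf β cc ctil t)

/-- The natural increment probability `u_{d+1}`. -/
def denBLast (p β : ℝ → ℝ) (cc ctil : ℝ) (t : ℝ) (x : ℕ → ℝ) (d : ℕ) : ℝ :=
  (1 - p t) * (1 - (∑ i ∈ Finset.range (d+1), ((i : ℝ) + β t) * x i) / sigf β cc ctil t)

/-- The relative-entropy integrand `L_d(t, x, ẋ)` of the rate function `I_d`. -/
def LdE (p β : ℝ → ℝ) (cc ctil : ℝ) (d : ℕ) (t : ℝ) (x v : ℕ → ℝ) : EReal :=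
  (∑ i ∈ Finset.range (d+1), entTerm (numA v i) (denB p β cc ctil t x i))
    + entTerm (numALast v d) (denBLast p β cc ctil t x d)

/-- The set `Γ_d` of admissible paths. -/
def Gamma (d : ℕ) (c : ℕ → ℝ) : Set (C(I01, Fin (d+2) → ℝ)) :=
  {φ | (∀ i, φ pt0 i = cvec d c i)
    ∧ (∀ (t : I01) (i : Fin (d+2)), 0 ≤ φ t i)
    ∧ (∀ i : Fin (d+2), LipschitzWith 1 (fun t : ℝ => pext φ t i))
    ∧ (∀ᵐ t ∂(volume.restrict (Set.Icc (0:ℝ) 1)),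
        (∀ i ≤ d, 0 ≤ ∑ l ∈ Finset.range (i+1), vofN φ t l
            ∧ ∑ l ∈ Finset.range (i+1), vofN φ t l ≤ 1)
        ∧ (∑ i ∈ Finset.range (d+2), vofN φ t i = 1)
        ∧ (∑ i ∈ Finset.range (d+2), (i : ℝ) * vofN φ t i
            = ∑ i ∈ Finset.range (d+1), numA (vofN φ t) i)
        ∧ ∑ i ∈ Finset.range (d+1), numA (vofN φ t) i ≤ 1)}

/-- Extended reals to `[0,∞]`, sending `⊤` to `⊤` and negatives to `0`. -/
def erealToENNReal (x : EReal) : ℝ≥0∞ := if x = ⊤ then ⊤ else ENNReal.ofReal x.toReal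

/-- The finite-dimensional rate function `I_d`. -/
def Irate (p β : ℝ → ℝ) (c : ℕ → ℝ) (cc ctil : ℝ) (d : ℕ)
    (φ : C(I01, Fin (d+2) → ℝ)) : ℝ≥0∞ :=
  if φ ∈ Gamma d c then
    ∫⁻ t in Set.Icc (0:ℝ) 1, erealToENNReal (LdE p β cc ctil d t (xofN φ t) (vofN φ t))
  else ⊤

/-- The large deviation principle with rate `n` and good rate function `I`:
compact level sets, upper bound over closed sets, lower bound over open sets. -/
def IsLDP {Ω : Type*} [MeasurableSpace Ω] {Y : Type*} [TopologicalSpace Y]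
    (μ : Measure Ω) (Xn : ℕ → Ω → Y) (I : Y → ℝ≥0∞) : Prop :=
  (∀ M : ℝ≥0∞, M ≠ ⊤ → IsCompact {x | I x ≤ M})
  ∧ (∀ F : Set Y, IsClosed F →
      Filter.limsup (fun n : ℕ => ((Real.log ((μ ((Xn n) ⁻¹' F)).toReal) / n : ℝ) : EReal))
          Filter.atTop ≤ -((⨅ x ∈ F, I x : ℝ≥0∞) : EReal))
  ∧ (∀ G : Set Y, IsOpen G →
      -((⨅ x ∈ G, I x : ℝ≥0∞) : EReal)
        ≤ Filter.liminf (fun n : ℕ => ((Real.log ((μ ((Xn n) ⁻¹' G)).toReal) / n : ℝ) : EReal))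
            Filter.atTop)

/-- Convexity of an `[0,∞]`-valued rate function. -/
def ConvexRate {Y : Type*} [AddCommMonoid Y] [Module ℝ Y] (I : Y → ℝ≥0∞) : Prop :=
  ∀ x y : Y, ∀ a b : ℝ, 0 ≤ a → 0 ≤ b → a + b = 1 →
    I (a • x + b • y) ≤ ENNReal.ofReal a * I x + ENNReal.ofReal b * I y

/-- The `L¹` norm on `ℝ^{d+2}`. -/
def l1norm {d : ℕ} (v : Fin (d+2) → ℝ) : ℝ := ∑ i, |v i|

/-! ## The time-dependent preferential attachment urn process -/

/-- Effect of the increment `f_i` on an urn configuration `z` (`z k` = number of urns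
with exactly `k` balls): for `i = 0` a ball enters an urn of size `0` (or the new urn);
for `i ≥ 1` a new empty urn is created and an urn of size `i` becomes one of size `i+1`. -/
def applyF (i : ℕ) (z : ℕ → ℕ) : ℕ → ℕ :=
  if i = 0 then Function.update z 1 (z 1 + 1)
  else fun k => if k = 0 then z 0 + 1 else if k = i then z i - 1
    else if k = i + 1 then z (i+1) + 1 else z k

/-- Total weight `Σ_k (k + β) z_k` of a configuration. -/
def urnWeight (βv : ℝ) (z : ℕ → ℕ) : ℝ := ∑' k : ℕ, ((k : ℝ) + βv) * (z k : ℝ)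

/-- One-step transition probability of the urn scheme from `z` to `z'`. -/
def stepProb (pv βv : ℝ) (z z' : ℕ → ℕ) : ℝ :=
  ∑' i : ℕ,
    if z' = applyF i z then
      (if i = 0 then pv + (1 - pv) * (βv * (z 0 : ℝ) / urnWeight βv z)
       else (1 - pv) * (((i : ℝ) + βv) * (z i : ℝ) / urnWeight βv z))
    else 0

/-- `Z n j ω k` is the number of urns with `k` balls at step `j` in the `n`-th row; the law
of each row is that of the time-dependent preferential attachment urn Markov chain. -/
def UrnLaw {Ω : Type*} [MeasurableSpace Ω] (μ : Measure Ω) (p β : ℝ → ℝ)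
    (init : ℕ → ℕ → ℕ) (Z : ℕ → ℕ → Ω → ℕ → ℕ) : Prop :=
  (∀ n ω, Z n 0 ω = init n) ∧
  ∀ n : ℕ, 1 ≤ n → ∀ traj : ℕ → ℕ → ℕ, traj 0 = init n →
    μ {ω | ∀ j ≤ n, Z n j ω = traj j}
      = ENNReal.ofReal (∏ j ∈ Finset.range n,
          stepProb (p ((j : ℝ) / n)) (β ((j : ℝ) / n)) (traj j) (traj (j+1)))

/-- Truncated degree vector `(Z_0, …, Z_d, Z̄_{d+1})` of a configuration. -/
def Ztrunc (d : ℕ) (z : ℕ → ℕ) : Fin (d+2) → ℝ :=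
  fun i => if (i : ℕ) ≤ d then (z i : ℝ) else ∑' k : ℕ, (z (k + (d+1)) : ℝ)

/-- `X n` is the path `X^{n,d}`, the linear interpolation of `(1/n) Z^{n,d}(⌊nt⌋)`. -/
def InterpD {Ω : Type*} (d : ℕ) (Z : ℕ → ℕ → Ω → ℕ → ℕ)
    (X : ℕ → Ω → C(I01, Fin (d+2) → ℝ)) : Prop :=
  ∀ n : ℕ, 1 ≤ n → ∀ ω (t : I01) (i : Fin (d+2)),
    X n ω t i
      = (1 - ((n : ℝ) * (t : ℝ) - (⌊(n : ℝ) * (t : ℝ)⌋₊ : ℝ)))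
          * Ztrunc d (Z n ⌊(n : ℝ) * (t : ℝ)⌋₊ ω) i / n
        + ((n : ℝ) * (t : ℝ) - (⌊(n : ℝ) * (t : ℝ)⌋₊ : ℝ))
          * Ztrunc d (Z n (⌊(n : ℝ) * (t : ℝ)⌋₊ + 1) ω) i / n

/-- `X n` is the path `X^{n,∞}`, the linear interpolation of `(1/n) Z^{n,∞}(⌊nt⌋)`. -/
def InterpInf {Ω : Type*} (Z : ℕ → ℕ → Ω → ℕ → ℕ)
    (X : ℕ → Ω → ∀ _ : ℕ, C(I01, ℝ)) : Prop :=
  ∀ n : ℕ, 1 ≤ n → ∀ ω (i : ℕ) (t : I01),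
    X n ω i t
      = (1 - ((n : ℝ) * (t : ℝ) - (⌊(n : ℝ) * (t : ℝ)⌋₊ : ℝ)))
          * (Z n ⌊(n : ℝ) * (t : ℝ)⌋₊ ω i : ℝ) / n
        + ((n : ℝ) * (t : ℝ) - (⌊(n : ℝ) * (t : ℝ)⌋₊ : ℝ))
          * (Z n (⌊(n : ℝ) * (t : ℝ)⌋₊ + 1) ω i : ℝ) / n

/-! ## The infinite-dimensional rate function -/

def extOne (f : C(I01, ℝ)) : ℝ → ℝ := fun t => f (Set.projIcc 0 1 zero_le_one t)

def xofInf (ξ : ∀ _ : ℕ, C(I01, ℝ)) (t : ℝ) : ℕ → ℝ := fun i => extOne (ξ i) t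

def vofInf (ξ : ∀ _ : ℕ, C(I01, ℝ)) (t : ℝ) : ℕ → ℝ := fun i => deriv (extOne (ξ i)) t

/-- The set `Γ^∞` of admissible infinite-dimensional paths. -/
def GammaInf (c : ℕ → ℝ) : Set (∀ _ : ℕ, C(I01, ℝ)) :=
  {ξ | (∀ i, ξ i pt0 = c i)
    ∧ (∀ i (t : I01), 0 ≤ ξ i t)
    ∧ (∀ i, LipschitzWith 1 (extOne (ξ i)))
    ∧ (∀ t : I01, Summable (fun i => ξ i t))
    ∧ (∀ᵐ t ∂(volume.restrict (Set.Icc (0:ℝ) 1)),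
        (∀ i : ℕ, 0 ≤ ∑ l ∈ Finset.range (i+1), vofInf ξ t l
            ∧ ∑ l ∈ Finset.range (i+1), vofInf ξ t l ≤ 1)
        ∧ HasDerivAt (fun s : ℝ => ∑' i, extOne (ξ i) s) 1 t
        ∧ Summable (fun i => numA (vofInf ξ t) i)
        ∧ ∑' i, numA (vofInf ξ t) i ≤ 1)}

/-- The infinite-dimensional rate function `I^∞`. -/
def IrateInf (p β : ℝ → ℝ) (c : ℕ → ℝ) (cc ctil : ℝ) (ξ : ∀ _ : ℕ, C(I01, ℝ)) : ℝ≥0∞ :=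
  if ξ ∈ GammaInf c then
    ∫⁻ t in Set.Icc (0:ℝ) 1,
      ⨆ d : ℕ, erealToENNReal (LdE p β cc ctil d t (xofInf ξ t) (vofInf ξ t))
  else ⊤

/-! ## Projective limit setting -/

/-- The truncation `p_{ij} : ℝ^{j+2} → ℝ^{i+2}`, `(x_0,…,x_{j+1}) ↦ (x_0,…,x_i, Σ_{l>i} x_l)`. -/
def truncMap (i j : ℕ) (_hij : i ≤ j) : (Fin (j+2) → ℝ) → (Fin (i+2) → ℝ) :=
  fun x k =>
    if (k : ℕ) ≤ i then x (Fin.castLE (by omega) k)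
    else ∑ l : Fin (j+2), if i + 1 ≤ (l : ℕ) then x l else 0

lemma truncMap_continuous (i j : ℕ) (hij : i ≤ j) : Continuous (truncMap i j hij) := by
  apply continuous_pi
  intro k
  show Continuous fun x : Fin (j+2) → ℝ => truncMap i j hij x k
  by_cases h : (k : ℕ) ≤ i
  · simp only [truncMap, if_pos h]
    exact continuous_apply _
  · simp only [truncMap, if_neg h]
    apply continuous_finset_sum
    intro l _
    by_cases hl : i + 1 ≤ (l : ℕ)
    · simp only [if_pos hl]; exact continuous_apply _
    · simp only [if_neg hl]; exact continuous_const

/-- The projection `p_{ij} : 𝒴_j → 𝒴_i` on path spaces. -/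
def projMapC (i j : ℕ) (hij : i ≤ j) (φ : C(I01, Fin (j+2) → ℝ)) : C(I01, Fin (i+2) → ℝ) :=
  ⟨fun t => truncMap i j hij (φ t), (truncMap_continuous i j hij).comp φ.continuous⟩

/-- The projective limit `lim← 𝒴_j ⊆ Π_j 𝒴_j`. -/
def ProjLim : Set (∀ j : ℕ, C(I01, Fin (j+2) → ℝ)) :=
  {x | ∀ (i j : ℕ) (hij : i ≤ j), projMapC i j hij (x j) = x i}

/-- `Γ* ⊆ lim← 𝒴_j`: compatible families with all coordinates admissible. -/
def GammaStar (c : ℕ → ℝ) : Set (∀ j : ℕ, C(I01, Fin (j+2) → ℝ)) :=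
  {x | x ∈ ProjLim ∧ ∀ d, x d ∈ Gamma d c}

/-- The projective-limit rate function `J^∞(φ) = sup_d I_d(p_d φ)`. -/
def Jinf (p β : ℝ → ℝ) (c : ℕ → ℝ) (cc ctil : ℝ)
    (x : ∀ j : ℕ, C(I01, Fin (j+2) → ℝ)) : ℝ≥0∞ :=
  if x ∈ ProjLim then ⨆ d : ℕ, Irate p β c cc ctil d (x d) else ⊤

/-! ## Carathéodory solutions of the LLN ODE systems -/

/-- A Carathéodory solution on `[0,T]` of `ẋ = F(t,x)`, `x(0) = x₀`, in coordinates `≤ N`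
(equivalently, a solution of the associated integral equation). -/
def IsCaraSol (F : ℝ → (ℕ → ℝ) → ℕ → ℝ) (x0 : ℕ → ℝ) (N : ℕ) (T : ℝ) (f : ℝ → ℕ → ℝ) : Prop :=
  ∀ i ≤ N, IntervalIntegrable (fun s => F s (f s) i) volume 0 T ∧
    ∀ t ∈ Set.Icc (0:ℝ) T, f t i = x0 i + ∫ s in (0:ℝ)..t, F s (f s) i

/-- A Carathéodory solution on `[0,∞)`. -/
def IsCaraSolIci (F : ℝ → (ℕ → ℝ) → ℕ → ℝ) (x0 : ℕ → ℝ) (N : ℕ) (f : ℝ → ℕ → ℝ) : Prop :=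
  ∀ i ≤ N, (∀ T > (0:ℝ), IntervalIntegrable (fun s => F s (f s) i) volume 0 T) ∧
    ∀ t ∈ Set.Ici (0:ℝ), f t i = x0 i + ∫ s in (0:ℝ)..t, F s (f s) i

/-- The vector field of the LLN ODE system, coordinates `i ≥ 0`. -/
def LLNfield0 (p β : ℝ → ℝ) (cc ctil : ℝ) (t : ℝ) (x : ℕ → ℝ) : ℕ → ℝ := fun i =>
  if i = 0 then 1 - p t - (1 - p t) * (β t * x 0 / sigf β cc ctil t)
  else (if i = 1 then p t else 0)
    + (1 - p t) * ((((i : ℝ) - 1) + β t) * x (i-1) / sigf β cc ctil t)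
    - (1 - p t) * (((i : ℝ) + β t) * x i / sigf β cc ctil t)

/-- The vector field of the `d`-dimensional LLN ODE system (with the last coordinate
`φ̇_{d+1} = 1 - Σ_{i≤d} φ̇_i`). -/
def LLNfield (p β : ℝ → ℝ) (cc ctil : ℝ) (d : ℕ) (t : ℝ) (x : ℕ → ℝ) : ℕ → ℝ := fun i =>
  if i ≤ d then LLNfield0 p β cc ctil t x i
  else if i = d + 1 then 1 - ∑ l ∈ Finset.range (d+1), LLNfield0 p β cc ctil t x l
  else 0

/-- Truncation of an infinite family `ζ` to the `d`-dimensional path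
`(ζ_0, …, ζ_d, ζ̄_{d+1})` with `ζ̄_{d+1}(t) = t + c - Σ_{i≤d} ζ_i(t)`. -/
def truncSol (d : ℕ) (cc : ℝ) (ζ : ℕ → ℝ → ℝ) : ℝ → ℕ → ℝ := fun t i =>
  if i ≤ d then ζ i t
  else if i = d + 1 then t + cc - ∑ l ∈ Finset.range (d+1), ζ l t
  else 0

/-- The integrating factor `M_i(s,t) = exp[-∫_s^t (1-p(u))(i+β(u))/σ(u) du]`. -/
def Mfac (p β : ℝ → ℝ) (cc ctil : ℝ) (i : ℕ) (s t : ℝ) : ℝ :=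
  Real.exp (-(∫ u in s..t, (1 - p u) * (((i : ℝ) + β u) / sigf β cc ctil u)))

/-- The explicit solution formulas of the LLN ODE system. -/
def zetaExpl (p β : ℝ → ℝ) (cc ctil : ℝ) (c : ℕ → ℝ) : ℕ → ℝ → ℝ
  | 0 => fun t => c 0 * Mfac p β cc ctil 0 0 t
      + ∫ s in (0:ℝ)..t, (1 - p s) * Mfac p β cc ctil 0 s t
  | (i+1) => fun t => c (i+1) * Mfac p β cc ctil (i+1) 0 t
      + ∫ s in (0:ℝ)..t,
          ((if i = 0 then p s else 0)
            + (1 - p s) * (((i : ℝ) + β s) * zetaExpl p β cc ctil c i s / sigf β cc ctil s))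
          * Mfac p β cc ctil (i+1) s t

/-- The scalar field `G(t,x)` of the comparison ODE. -/
def Gfield (p β : ℝ → ℝ) (cc ctil : ℝ) (t x : ℝ) : ℝ :=
  p t + (1 - p t) * ((x + β t * (t + cc)) / sigf β cc ctil t)

/-- A scalar Carathéodory solution on `[0,∞)`. -/
def IsCaraScalIci (G : ℝ → ℝ → ℝ) (x0 : ℝ) (f : ℝ → ℝ) : Prop :=
  (∀ T > (0:ℝ), IntervalIntegrable (fun s => G s (f s)) volume 0 T) ∧
    ∀ t ∈ Set.Ici (0:ℝ), f t = x0 + ∫ s in (0:ℝ)..t, G s (f s)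

/-- The vector field of the comparison system `O(o₁,o₂,o₃,o₄,o₅)` (coordinates `0 ≤ i ≤ d`). -/
def OField (o1 o2 o3 o4 o5 : ℝ) (d : ℕ) (t : ℝ) (x : ℕ → ℝ) : ℕ → ℝ := fun i =>
  if i = 0 then 1 - o1 - (1 - o2) * (o3 / (1 + o4)) * (x 0 / (t + o5))
  else if i ≤ d then
    (if i = 1 then o1 else 0)
      + (1 - o2) / (1 + o4) * (((((i : ℝ) - 1) + o3) * x (i-1) - ((i : ℝ) + o3) * x i) / (t + o5))
  else 0

/-! ## Constructions for the lower bound -/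

/-- Convex combination `φ_θ = (1-θ)φ* + θℓ`. -/
def phiMix {d : ℕ} (θ : ℝ) (φstar ℓC : C(I01, Fin (d+2) → ℝ)) : C(I01, Fin (d+2) → ℝ) :=
  (1 - θ) • φstar + θ • ℓC

/-- Block time-average `γ_κ` of the derivative of `φ` on the `κ`-block partition of `[0,1]`
(with `γ_κ(1) = γ_κ(1 - 1/κ)`). -/
def blockAvg {d : ℕ} (φ : C(I01, Fin (d+2) → ℝ)) (κ : ℕ) (t : ℝ) (i : Fin (d+2)) : ℝ :=
  (κ : ℝ) * ∫ s in (((min ⌊t * κ⌋₊ (κ-1) : ℕ) : ℝ)/κ)..((((min ⌊t * κ⌋₊ (κ-1) : ℕ) : ℝ) + 1)/κ),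
      pderivC φ s i

/-- The regularized path `ψ_κ(t) = c^d + ∫_0^t γ_κ(s) ds`. -/
def psiKappa {d : ℕ} (φ : C(I01, Fin (d+2) → ℝ)) (κ : ℕ) (c : ℕ → ℝ) (t : ℝ)
    (i : Fin (d+2)) : ℝ :=
  cvec d c i + ∫ s in (0:ℝ)..t, blockAvg φ κ s i

/-- The increment vectors `f_0, …, f_{d+1}` of the truncated chain. -/
def fvec (d : ℕ) (i : ℕ) : Fin (d+2) → ℝ := fun k =>
  if i = 0 then (if (k : ℕ) = 1 then 1 else 0)
  else if i ≤ d then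
    (if (k : ℕ) = 0 then 1 else 0) + (if (k : ℕ) = i then -1 else 0)
      + (if (k : ℕ) = i + 1 then 1 else 0)
  else if (k : ℕ) = 0 then 1 else 0

/-- The switching times `t_i = δ - Σ_{l=i}^d (δ + [c^d]_l - [ψ_κ(δ)]_l)`, `t_{d+1} = δ`. -/
def tSwitch {d : ℕ} (ψδ : Fin (d+2) → ℝ) (c : ℕ → ℝ) (δ : ℝ) : ℕ → ℝ := fun i =>
  if i ≤ d then
    δ - ∑ l ∈ Finset.Icc i d,
      (δ + (∑ m ∈ Finset.range (l+1), cvecN d c m) - (∑ m ∈ Finset.range (l+1), toN ψδ m))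
  else δ

/-- The modified step derivative `γ*`: increment `f_{d+1}` on `[0,t_0)`, `f_i` on
`[t_i, t_{i+1})` before time `δ`, and `γ_κ` from `δ` on. -/
def gammaStar {d : ℕ} (g : ℝ → Fin (d+2) → ℝ) (ts : ℕ → ℝ) (δ : ℝ) (t : ℝ) :
    Fin (d+2) → ℝ :=
  if δ ≤ t then g t
  else if t < ts 0 then fvec d (d+1)
  else fvec d (sSup {i : ℕ | i ≤ d ∧ ts i ≤ t})

def tSwitchFull {d : ℕ} (φstar ℓC : C(I01, Fin (d+2) → ℝ)) (θ : ℝ) (κ : ℕ) (c : ℕ → ℝ)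
    (δ : ℝ) : ℕ → ℝ :=
  tSwitch (fun i => psiKappa (phiMix θ φstar ℓC) κ c δ i) c δ

/-- `ψ̇* = γ*` built from the data `φ*, ℓ, θ, κ, δ`. -/
def gammaStarFull {d : ℕ} (φstar ℓC : C(I01, Fin (d+2) → ℝ)) (θ : ℝ) (κ : ℕ) (c : ℕ → ℝ)
    (δ : ℝ) : ℝ → Fin (d+2) → ℝ :=
  gammaStar (fun t => blockAvg (phiMix θ φstar ℓC) κ t) (tSwitchFull φstar ℓC θ κ c δ) δ

/-- The modified path `ψ*(t) = c^d + ∫_0^t γ*(s) ds`. -/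
def psiStarFull {d : ℕ} (φstar ℓC : C(I01, Fin (d+2) → ℝ)) (θ : ℝ) (κ : ℕ) (c : ℕ → ℝ)
    (δ : ℝ) (t : ℝ) : Fin (d+2) → ℝ :=
  fun i => cvec d c i + ∫ s in (0:ℝ)..t, gammaStarFull φstar ℓC θ κ c δ s i

/-! ## The controlled chain of the lower bound -/

/-- Mean of the control at step `l`: `ψ̇*(l/n)` if `l ≤ ⌊δn⌋`, or if `l ≥ ⌈δn⌉` and the
state is above the threshold; otherwise the mean `ρm l` of the natural increment law. -/
def ctrlMean {d : ℕ} (γs : ℝ → Fin (d+2) → ℝ) (ρm : ℕ → Fin (d+2) → ℝ)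
    (Xb : ℕ → Fin (d+2) → ℝ) (c : ℕ → ℝ) (e : Fin (d+2) → ℝ) (θ δ : ℝ) (n l : ℕ) :
    Fin (d+2) → ℝ :=
  if l ≤ ⌊δ * (n : ℝ)⌋₊ ∨ (⌈δ * (n : ℝ)⌉₊ ≤ l ∧ ∀ i, (θ/4) * (e i * δ + cvec d c i) ≤ Xb l i)
  then γs ((l : ℝ) / n) else ρm l

/-- The martingale `M^n(j) = X̄^n(j) - (1/n) Σ_{l<j} Ē(Ȳ^n(l) | X̄^n(l)) - c^d`. -/
def ctrlMart {d : ℕ} (γs : ℝ → Fin (d+2) → ℝ) (ρm : ℕ → Fin (d+2) → ℝ)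
    (Xb : ℕ → Fin (d+2) → ℝ) (c : ℕ → ℝ) (e : Fin (d+2) → ℝ) (θ δ : ℝ) (n j : ℕ) :
    Fin (d+2) → ℝ :=
  fun i => Xb j i - (1/(n:ℝ)) * ∑ l ∈ Finset.range j, ctrlMean γs ρm Xb c e θ δ n l i
    - cvec d c i

/-- The stopping time `τ_n = n ∧ min{⌈δn⌉ ≤ l ≤ n : X̄_i^n(l) < (θ/4)(e_i δ + c_i), some i}`. -/
def stopTau {d : ℕ} (Xb : ℕ → Fin (d+2) → ℝ) (c : ℕ → ℝ) (e : Fin (d+2) → ℝ)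
    (θ δ : ℝ) (n : ℕ) : ℕ :=
  sInf ({n} ∪ {l : ℕ | ⌈δ * (n : ℝ)⌉₊ ≤ l ∧ l ≤ n
    ∧ ∃ i, Xb l i < (θ/4) * (e i * δ + cvec d c i)})


/-!
Off `Γ*` some `I_d(p_d φ)` is infinite. On `Γ*` the compatibility `p_{d,d+1} φ^{d+1} = φ^d`
shows that `L_d(p_d φ(t))` is `L_{d+1}(p_{d+1} φ(t))` with the last two increments `f_{d+1}`,
`f_{d+2}` merged into one, numerators and denominators added. The log-sum inequality
`(a₁+a₂) log((a₁+a₂)/(b₁+b₂)) ≤ a₁ log(a₁/b₁) + a₂ log(a₂/b₂)` (convexity of `x log x`) then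
makes the integrands nondecreasing in `d`; the nonnegativity it needs for the new denominators
comes from the mass identities `Σ φ_i(t) = c + t`, `Σ i φ_i(t) ≤ c̃ + t`. Monotone convergence
exchanges `sup_d` with the integral.
-/

lemma add_mul_log_div_add_le {a₁ a₂ b₁ b₂ : ℝ} (ha₁ : 0 ≤ a₁) (ha₂ : 0 ≤ a₂) (hb₁ : 0 < b₁)
    (hb₂ : 0 < b₂) :
    (a₁ + a₂) * log ((a₁ + a₂) / (b₁ + b₂)) ≤ a₁ * log (a₁ / b₁) + a₂ * log (a₂ / b₂) := by
  have hB : 0 < b₁ + b₂ := by positivity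
  have key := convexOn_mul_log.2 (mem_Ici.2 (div_nonneg ha₁ hb₁.le))
    (mem_Ici.2 (div_nonneg ha₂ hb₂.le)) (div_nonneg hb₁.le hB.le) (div_nonneg hb₂.le hB.le)
    (by field_simp)
  have hmean : b₁ / (b₁ + b₂) * (a₁ / b₁) + b₂ / (b₁ + b₂) * (a₂ / b₂)
      = (a₁ + a₂) / (b₁ + b₂) := by
    field_simp
  simp only [smul_eq_mul, hmean] at key
  calc (a₁ + a₂) * log ((a₁ + a₂) / (b₁ + b₂))
      = (b₁ + b₂) * ((a₁ + a₂) / (b₁ + b₂) * log ((a₁ + a₂) / (b₁ + b₂))) := by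
        rw [← mul_assoc, mul_div_cancel₀ _ hB.ne']
    _ ≤ (b₁ + b₂) * (b₁ / (b₁ + b₂) * (a₁ / b₁ * log (a₁ / b₁))
          + b₂ / (b₁ + b₂) * (a₂ / b₂ * log (a₂ / b₂))) := by gcongr
    _ = a₁ * log (a₁ / b₁) + a₂ * log (a₂ / b₂) := by field_simp

lemma entTerm_ne_bot (a b : ℝ) : entTerm a b ≠ ⊥ := by
  unfold entTerm
  split_ifs
  · exact EReal.zero_ne_bot
  · exact top_ne_bot
  · exact EReal.coe_ne_bot _

lemma entTerm_zero_left (b : ℝ) : entTerm 0 b = 0 := if_pos rfl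

lemma entTerm_of_nonpos {a b : ℝ} (ha : a ≠ 0) (hb : b ≤ 0) : entTerm a b = ⊤ := by
  rw [entTerm, if_neg ha, if_pos hb]

lemma entTerm_of_pos {a b : ℝ} (ha : a ≠ 0) (hb : 0 < b) :
    entTerm a b = ((a * log (a / b) : ℝ) : EReal) := by
  rw [entTerm, if_neg ha, if_neg hb.not_ge]

lemma entTerm_anti_right {a b b' : ℝ} (ha : 0 ≤ a) (hbb' : b ≤ b') :
    entTerm a b' ≤ entTerm a b := by
  rcases ha.eq_or_lt with rfl | ha
  · simp [entTerm_zero_left]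
  rcases le_or_gt b 0 with hb | hb
  · simp [entTerm_of_nonpos ha.ne' hb]
  have hb' := hb.trans_le hbb'
  rw [entTerm_of_pos ha.ne' hb, entTerm_of_pos ha.ne' hb', EReal.coe_le_coe_iff]
  gcongr

lemma entTerm_add_le {a₁ a₂ b₁ b₂ : ℝ} (ha₁ : 0 ≤ a₁) (ha₂ : 0 ≤ a₂) (hb₁ : 0 ≤ b₁)
    (hb₂ : 0 ≤ b₂) :
    entTerm (a₁ + a₂) (b₁ + b₂) ≤ entTerm a₁ b₁ + entTerm a₂ b₂ := by
  rcases ha₁.eq_or_lt with rfl | ha₁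
  · rw [zero_add, entTerm_zero_left, zero_add]
    exact entTerm_anti_right ha₂ (by linarith)
  rcases ha₂.eq_or_lt with rfl | ha₂
  · rw [add_zero, entTerm_zero_left, add_zero]
    exact entTerm_anti_right ha₁.le (by linarith)
  rcases hb₁.eq_or_lt with rfl | hb₁
  · rw [entTerm_of_nonpos ha₁.ne' le_rfl, EReal.top_add_of_ne_bot (entTerm_ne_bot _ _)]
    exact le_top
  rcases hb₂.eq_or_lt with rfl | hb₂
  · rw [entTerm_of_nonpos ha₂.ne' le_rfl, EReal.add_top_of_ne_bot (entTerm_ne_bot _ _)]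
    exact le_top
  rw [entTerm_of_pos (by positivity) (by positivity), entTerm_of_pos ha₁.ne' hb₁,
    entTerm_of_pos ha₂.ne' hb₂, ← EReal.coe_add, EReal.coe_le_coe_iff]
  exact add_mul_log_div_add_le ha₁.le ha₂.le hb₁ hb₂

section Integrand

variable (p β : ℝ → ℝ) (cc ctil : ℝ) (t : ℝ)

lemma numA_congr {v v' : ℕ → ℝ} {i : ℕ} (hv : ∀ l ≤ i, v l = v' l) :
    numA v i = numA v' i := by
  unfold numA
  exact congrArg _ (Finset.sum_congr rfl fun l hl =>
    hv l (Finset.mem_range_succ_iff.mp hl))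

lemma LdE_congr {d : ℕ} {x x' v v' : ℕ → ℝ} (hx : ∀ i ≤ d, x i = x' i)
    (hv : ∀ i ≤ d, v i = v' i) :
    LdE p β cc ctil d t x v = LdE p β cc ctil d t x' v' := by
  have hA : ∀ i ≤ d, numA v i = numA v' i := fun i hi =>
    numA_congr fun l hl => hv l (hl.trans hi)
  have hB : ∀ i ≤ d, denB p β cc ctil t x i = denB p β cc ctil t x' i := by
    intro i hi
    simp only [denB, hx i hi, hx 0 (Nat.zero_le d)]
  have hBL : denBLast p β cc ctil t x d = denBLast p β cc ctil t x' d := by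
    unfold denBLast
    congr 3
    exact Finset.sum_congr rfl fun i hi => by
      rw [hx i (Finset.mem_range_succ_iff.mp hi)]
  have hAL : numALast v d = numALast v' d := by
    unfold numALast
    exact congrArg _ (Finset.sum_congr rfl fun i hi =>
      hA i (Finset.mem_range_succ_iff.mp hi))
  unfold LdE
  rw [hBL, hAL]
  congr 1
  exact Finset.sum_congr rfl fun i hi => by
    have hi := Finset.mem_range_succ_iff.mp hi
    rw [hA i hi, hB i hi]

lemma LdE_congr_params {p' β' : ℝ → ℝ} {d : ℕ} {x v : ℕ → ℝ} (hp : p t = p' t)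
    (hβ : β t = β' t) : LdE p β cc ctil d t x v = LdE p' β' cc ctil d t x v := by
  simp only [LdE, denB, denBLast, sigf, hp, hβ]

lemma numALast_eq_numA_succ_add (v : ℕ → ℝ) (d : ℕ) :
    numALast v d = numA v (d + 1) + numALast v (d + 1) := by
  simp only [numALast, Finset.sum_range_succ _ (d + 1)]
  ring

lemma denBLast_eq_denB_succ_add (x : ℕ → ℝ) (d : ℕ) :
    denBLast p β cc ctil t x d
      = denB p β cc ctil t x (d + 1) + denBLast p β cc ctil t x (d + 1) := by
  simp only [denBLast, denB, if_neg (Nat.succ_ne_zero d), Finset.sum_range_succ _ (d + 1),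
    add_div]
  push_cast
  ring

lemma LdE_le_succ {d : ℕ} {x v : ℕ → ℝ} (hA : 0 ≤ numA v (d + 1)) (hAL : 0 ≤ numALast v (d + 1))
    (hB : 0 ≤ denB p β cc ctil t x (d + 1)) (hBL : 0 ≤ denBLast p β cc ctil t x (d + 1)) :
    LdE p β cc ctil d t x v ≤ LdE p β cc ctil (d + 1) t x v := by
  rw [LdE, LdE, numALast_eq_numA_succ_add, denBLast_eq_denB_succ_add,
    Finset.sum_range_succ _ (d + 1), add_assoc]
  exact add_le_add le_rfl (entTerm_add_le hA hAL hB hBL)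

variable {p β cc ctil t}

lemma sigf_nonneg (hcc : 0 ≤ cc) (hctil : 0 ≤ ctil) (hβ : 0 ≤ β t) (ht : 0 ≤ t) :
    0 ≤ sigf β cc ctil t := by
  unfold sigf
  positivity

lemma denB_nonneg {x : ℕ → ℝ} {i : ℕ} (hi : i ≠ 0) (hp : p t ≤ 1) (hβ : 0 ≤ β t)
    (hσ : 0 ≤ sigf β cc ctil t) (hx : 0 ≤ x i) : 0 ≤ denB p β cc ctil t x i := by
  rw [denB, if_neg hi]
  have : 0 ≤ 1 - p t := sub_nonneg.2 hp
  positivity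

lemma denBLast_nonneg {x : ℕ → ℝ} {d : ℕ} (hp : p t ≤ 1) (hσ : 0 ≤ sigf β cc ctil t)
    (hx : ∑ i ∈ Finset.range (d + 1), ((i : ℝ) + β t) * x i ≤ sigf β cc ctil t) :
    0 ≤ denBLast p β cc ctil t x d := by
  exact mul_nonneg (sub_nonneg.2 hp) (sub_nonneg.2 (div_le_one_of_le₀ hx hσ))

end Integrand

section Paths

variable {d : ℕ}

lemma toN_of_lt (g : Fin (d + 2) → ℝ) {i : ℕ} (h : i < d + 2) : toN g i = g ⟨i, h⟩ := dif_pos h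

lemma toN_of_le (g : Fin (d + 2) → ℝ) {i : ℕ} (h : d + 2 ≤ i) : toN g i = 0 :=
  dif_neg h.not_gt

lemma measurable_toN {α : Type*} [MeasurableSpace α] {g : α → Fin (d + 2) → ℝ}
    (hg : ∀ i, Measurable fun a => g a i) (i : ℕ) : Measurable fun a => toN (g a) i := by
  by_cases h : i < d + 2
  · simpa only [toN_of_lt _ h] using hg ⟨i, h⟩
  · simpa only [toN_of_le _ (not_lt.1 h)] using measurable_const

lemma pext_zero (φ : C(I01, Fin (d + 2) → ℝ)) : pext φ 0 = φ pt0 := by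
  rw [pext, Set.projIcc_left]
  rfl

lemma measurable_xofN (φ : C(I01, Fin (d + 2) → ℝ)) (i : ℕ) :
    Measurable fun t => xofN φ t i :=
  measurable_toN (fun j => ((continuous_apply j).comp
    (φ.continuous.comp continuous_projIcc)).measurable) i

lemma measurable_vofN (φ : C(I01, Fin (d + 2) → ℝ)) (i : ℕ) :
    Measurable fun t => vofN φ t i :=
  measurable_toN (fun _ => measurable_deriv _) i

variable {φ : C(I01, Fin (d + 2) → ℝ)} (hlip : ∀ i, LipschitzWith 1 fun t => pext φ t i)
include hlip

lemma abs_vofN_le_one (t : ℝ) (i : ℕ) : |vofN φ t i| ≤ 1 := by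
  by_cases h : i < d + 2
  · simpa [vofN, toN_of_lt _ h, pderivC] using norm_deriv_le_of_lipschitz (hlip ⟨i, h⟩) (x₀ := t)
  · simp [vofN, toN_of_le _ (not_lt.1 h)]

lemma intervalIntegrable_vofN (i : ℕ) (a b : ℝ) :
    IntervalIntegrable (fun s => vofN φ s i) volume a b :=
  (intervalIntegrable_const (c := (1 : ℝ))).mono_fun
    (measurable_vofN φ i).aestronglyMeasurable
    (Eventually.of_forall fun s => by simpa using abs_vofN_le_one hlip s i)

lemma xofN_eq_cvecN_add_integral {c : ℕ → ℝ} (h0 : ∀ i, φ pt0 i = cvec d c i) (t : ℝ)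
    (i : ℕ) : xofN φ t i = cvecN d c i + ∫ s in (0 : ℝ)..t, vofN φ s i := by
  by_cases h : i < d + 2
  · have hftc := ((hlip ⟨i, h⟩).lipschitzOnWith (s := uIcc 0 t)).absolutelyContinuousOnInterval
      |>.integral_deriv_eq_sub
    simp only [xofN, vofN, cvecN, toN_of_lt _ h, pderivC] at hftc ⊢
    rw [hftc, pext_zero, h0]
    ring
  · simp [xofN, vofN, cvecN, toN_of_le _ (not_lt.1 h)]

lemma sum_mul_xofN_eq {c : ℕ → ℝ} (h0 : ∀ i, φ pt0 i = cvec d c i) (t : ℝ) (w : ℕ → ℝ) :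
    ∑ i ∈ Finset.range (d + 2), w i * xofN φ t i
      = ∑ i ∈ Finset.range (d + 2), w i * cvecN d c i
        + ∫ s in (0 : ℝ)..t, ∑ i ∈ Finset.range (d + 2), w i * vofN φ s i := by
  rw [intervalIntegral.integral_finsetSum fun i _ =>
    (intervalIntegrable_vofN hlip i 0 t).const_mul (w i), ← Finset.sum_add_distrib]
  refine Finset.sum_congr rfl fun i _ => ?_
  rw [intervalIntegral.integral_const_mul, xofN_eq_cvecN_add_integral hlip h0, mul_add]

end Paths

section InitialData

variable {c : ℕ → ℝ} {cc ctil : ℝ} (hLIM : LIMc c cc ctil) (d : ℕ)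
include hLIM

lemma LIMc.cc_nonneg : 0 ≤ cc := hLIM.cc_eq ▸ tsum_nonneg hLIM.nonneg

lemma LIMc.ctil_nonneg : 0 ≤ ctil :=
  hLIM.ctil_eq ▸ tsum_nonneg fun i => mul_nonneg i.cast_nonneg (hLIM.nonneg i)

omit hLIM in
lemma cvecN_of_le {i : ℕ} (hi : i ≤ d) : cvecN d c i = c i := by
  rw [cvecN, toN_of_lt _ (by omega), cvec, if_pos hi]

omit hLIM in
lemma cvecN_succ : cvecN d c (d + 1) = ∑' k, c (k + (d + 1)) := by
  rw [cvecN, toN_of_lt _ (by omega), cvec, if_neg (by simp)]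

lemma LIMc.sum_cvecN : ∑ i ∈ Finset.range (d + 2), cvecN d c i = cc := by
  rw [Finset.sum_range_succ, cvecN_succ, hLIM.cc_eq,
    ← hLIM.summable.sum_add_tsum_nat_add (d + 1)]
  congr 1
  exact Finset.sum_congr rfl fun i hi => cvecN_of_le d (Finset.mem_range_succ_iff.mp hi)

/-- The tail mass `Σ_{k>d} c_k` sits at index `d+1`, below every index it stands for. -/
lemma LIMc.sum_mul_cvecN_le : ∑ i ∈ Finset.range (d + 2), (i : ℝ) * cvecN d c i ≤ ctil := by
  have htail := hLIM.summable.comp_injective (add_left_injective (d + 1))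
  have hmul_tail := (summable_nat_add_iff (d + 1)).2 hLIM.mul_summable
  rw [Finset.sum_range_succ, cvecN_succ, hLIM.ctil_eq,
    ← hLIM.mul_summable.sum_add_tsum_nat_add (d + 1), ← tsum_mul_left]
  refine add_le_add (le_of_eq (Finset.sum_congr rfl fun i hi => ?_))
    (Summable.tsum_le_tsum (fun k => ?_) (htail.mul_left _) hmul_tail)
  · rw [cvecN_of_le d (Finset.mem_range_succ_iff.mp hi)]
  · refine mul_le_mul_of_nonneg_right ?_ (hLIM.nonneg _)
    exact_mod_cast Nat.le_add_left (d + 1) k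

end InitialData

namespace Gamma

variable {d : ℕ} {c : ℕ → ℝ} {φ : C(I01, Fin (d + 2) → ℝ)}

lemma xofN_nonneg (hφ : φ ∈ Gamma d c) (t : ℝ) (i : ℕ) : 0 ≤ xofN φ t i := by
  by_cases h : i < d + 2
  · rw [xofN, toN_of_lt _ h]
    exact hφ.2.1 _ _
  · rw [xofN, toN_of_le _ (not_lt.1 h)]

variable {cc ctil : ℝ} (hLIM : LIMc c cc ctil) (hφ : φ ∈ Gamma d c) {t : ℝ}
  (ht : t ∈ Icc (0 : ℝ) 1)
include hLIM hφ ht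

lemma sum_xofN : ∑ i ∈ Finset.range (d + 2), xofN φ t i = cc + t := by
  obtain ⟨h0, -, hlip, hae⟩ := hφ
  have hv : ∫ s in (0 : ℝ)..t, ∑ i ∈ Finset.range (d + 2), vofN φ s i = t := by
    rw [intervalIntegral.integral_congr_ae (g := fun _ => (1 : ℝ))]
    · simp
    filter_upwards [(ae_restrict_iff' measurableSet_Icc).1 hae] with s hs hst
    rw [uIoc_of_le ht.1] at hst
    exact (hs ⟨hst.1.le, hst.2.trans ht.2⟩).2.1
  simpa [hLIM.sum_cvecN, hv] using sum_mul_xofN_eq hlip h0 t fun _ => 1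

lemma sum_mul_xofN_le : ∑ i ∈ Finset.range (d + 2), (i : ℝ) * xofN φ t i ≤ ctil + t := by
  obtain ⟨h0, -, hlip, hae⟩ := hφ
  have hv : ∫ s in (0 : ℝ)..t, ∑ i ∈ Finset.range (d + 2), (i : ℝ) * vofN φ s i ≤ t := by
    have hint := IntervalIntegrable.sum (Finset.range (d + 2)) fun i _ =>
      (intervalIntegrable_vofN hlip i 0 t).const_mul (i : ℝ)
    rw [Finset.sum_fn] at hint
    have := intervalIntegral.integral_mono_ae_restrict ht.1 hint
      intervalIntegrable_const (g := fun _ => (1 : ℝ))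
      (by filter_upwards [ae_restrict_of_ae_restrict_of_subset (Icc_subset_Icc le_rfl ht.2) hae]
            with s hs
          exact hs.2.2.1.trans_le hs.2.2.2)
    simpa using this
  rw [sum_mul_xofN_eq hlip h0]
  exact add_le_add (hLIM.sum_mul_cvecN_le d) hv

lemma sum_weight_mul_xofN_le_sigf (β : ℝ → ℝ) :
    ∑ i ∈ Finset.range (d + 2), ((i : ℝ) + β t) * xofN φ t i ≤ sigf β cc ctil t := by
  simp only [add_mul, Finset.sum_add_distrib, ← Finset.mul_sum, sum_xofN hLIM hφ ht, sigf]
  linarith [sum_mul_xofN_le hLIM hφ ht]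

end Gamma

namespace ProjLim

variable {x : ∀ j : ℕ, C(I01, Fin (j + 2) → ℝ)} (hx : x ∈ ProjLim) {d l : ℕ} (hl : l ≤ d)
include hx hl

lemma apply_succ (u : I01) : x (d + 1) u ⟨l, by omega⟩ = x d u ⟨l, by omega⟩ := by
  rw [← hx d (d + 1) d.le_succ]
  change _ = truncMap d (d + 1) d.le_succ (x (d + 1) u) ⟨l, by omega⟩
  rw [truncMap, if_pos hl]
  rfl

lemma xofN_succ (t : ℝ) : xofN (x (d + 1)) t l = xofN (x d) t l := by
  rw [xofN, xofN, toN_of_lt _ (by omega), toN_of_lt _ (by omega)]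
  exact apply_succ hx hl _

lemma vofN_succ (t : ℝ) : vofN (x (d + 1)) t l = vofN (x d) t l := by
  rw [vofN, vofN, toN_of_lt _ (by omega), toN_of_lt _ (by omega)]
  simp only [pderivC, pext, apply_succ hx hl]

omit hl in
lemma LdE_xofN_vofN_succ (p β : ℝ → ℝ) (cc ctil t : ℝ) :
    LdE p β cc ctil d t (xofN (x (d + 1)) t) (vofN (x (d + 1)) t)
      = LdE p β cc ctil d t (xofN (x d) t) (vofN (x d) t) :=
  LdE_congr p β cc ctil t (fun _ hi => xofN_succ hx hi t) (fun _ hi => vofN_succ hx hi t)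

end ProjLim

namespace GammaStar

variable {p β : ℝ → ℝ} {c : ℕ → ℝ} {cc ctil : ℝ} {x : ∀ j : ℕ, C(I01, Fin (j + 2) → ℝ)}

lemma LdE_le_succ (hLIM : LIMc c cc ctil) (hx : x ∈ GammaStar c) {t : ℝ}
    (ht : t ∈ Icc (0 : ℝ) 1) (hp : p t ≤ 1) (hβ : 0 ≤ β t) {d : ℕ}
    (hv : ∑ l ∈ Finset.range (d + 2), vofN (x (d + 1)) t l ≤ 1)
    (hA : ∑ i ∈ Finset.range (d + 2), numA (vofN (x (d + 1)) t) i ≤ 1) :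
    LdE p β cc ctil d t (xofN (x d) t) (vofN (x d) t)
      ≤ LdE p β cc ctil (d + 1) t (xofN (x (d + 1)) t) (vofN (x (d + 1)) t) := by
  have hφ := hx.2 (d + 1)
  have hσ := sigf_nonneg hLIM.cc_nonneg hLIM.ctil_nonneg hβ ht.1
  have hweight : ∑ i ∈ Finset.range (d + 2), ((i : ℝ) + β t) * xofN (x (d + 1)) t i
      ≤ sigf β cc ctil t := by
    refine le_trans ?_ (Gamma.sum_weight_mul_xofN_le_sigf hLIM hφ ht β)
    rw [Finset.sum_range_succ _ (d + 2)]
    have := mul_nonneg (by positivity : (0 : ℝ) ≤ ((d + 2 : ℕ) : ℝ) + β t)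
      (Gamma.xofN_nonneg hφ t (d + 2))
    linarith
  rw [← ProjLim.LdE_xofN_vofN_succ hx.1]
  exact _root_.LdE_le_succ p β cc ctil t (sub_nonneg.2 hv) (sub_nonneg.2 hA)
    (denB_nonneg d.succ_ne_zero hp hβ hσ (Gamma.xofN_nonneg hφ t _))
    (denBLast_nonneg hp hσ hweight)

lemma ae_monotone_LdE {p0 β0 β1 : ℝ} (hND : ND p β p0 β0 β1) (hLIM : LIMc c cc ctil)
    (hx : x ∈ GammaStar c) :
    ∀ᵐ t ∂volume.restrict (Icc (0 : ℝ) 1),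
      Monotone fun d : ℕ => LdE p β cc ctil d t (xofN (x d) t) (vofN (x d) t) := by
  filter_upwards [ae_all_iff.2 fun d => (hx.2 d).2.2.2, ae_restrict_mem measurableSet_Icc]
    with t hΓ ht
  refine monotone_nat_of_le_succ fun d => LdE_le_succ hLIM hx ht ?_ ?_ ?_ (hΓ (d + 1)).2.2.2
  · exact (hND.p_le t ht).trans hND.p0_lt_one.le
  · exact hND.β0_pos.le.trans (hND.β_lb t ht)
  · exact ((hΓ (d + 1)).1 (d + 1) le_rfl).2

end GammaStar

section Measurability

lemma erealToENNReal_eq_toENNReal : erealToENNReal = EReal.toENNReal := by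
  ext x
  simp only [erealToENNReal, EReal.toENNReal]
  split_ifs <;> rfl

lemma PiecewiseContinuousOn01.aemeasurable {f : ℝ → ℝ} (hf : PiecewiseContinuousOn01 f) :
    AEMeasurable f (volume.restrict (Icc 0 1)) := by
  obtain ⟨D, hD⟩ := hf
  have hcont : ContinuousOn f (Icc 0 1 \ D) := fun t ht =>
    (hD t ht.1 ht.2).mono sdiff_subset
  have hD0 : volume.restrict (Icc (0 : ℝ) 1) = volume.restrict (Icc 0 1 \ D) :=
    Measure.restrict_congr_set (sdiff_ae_eq_self.2 (measure_mono_null inter_subset_right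
      (D.finite_toSet.measure_zero volume))).symm
  rw [hD0]
  exact hcont.aemeasurable (measurableSet_Icc.diff D.finite_toSet.measurableSet)

variable {α : Type*} [MeasurableSpace α]

lemma Measurable.entTerm {f g : α → ℝ} (hf : Measurable f) (hg : Measurable g) :
    Measurable fun a => entTerm (f a) (g a) :=
  Measurable.ite (measurableSet_eq_fun hf measurable_const) measurable_const
    (Measurable.ite (measurableSet_le hg measurable_const) measurable_const
      (hf.mul (hf.div hg).log).coe_real_ereal)

lemma measurable_LdE {p β : ℝ → ℝ} (hp : Measurable p) (hβ : Measurable β) (cc ctil : ℝ) (d : ℕ)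
    {x v : ℝ → ℕ → ℝ} (hx : ∀ i, Measurable fun t => x t i)
    (hv : ∀ i, Measurable fun t => v t i) :
    Measurable fun t => LdE p β cc ctil d t (x t) (v t) := by
  have hσ : Measurable (sigf β cc ctil) := by unfold sigf; fun_prop
  have hA : ∀ i, Measurable fun t => numA (v t) i := fun i => by unfold numA; fun_prop
  have hB : ∀ i, Measurable fun t => denB p β cc ctil t (x t) i := fun i => by
    unfold denB; split_ifs <;> fun_prop
  have hBL : Measurable fun t => denBLast p β cc ctil t (x t) d := by
    unfold denBLast; fun_prop
  have hAL : Measurable fun t => numALast (v t) d := by unfold numALast; fun_prop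
  exact (Finset.measurable_sum _ fun i _ => (hA i).entTerm (hB i)).add (hAL.entTerm hBL)

lemma aemeasurable_LdE {μ : Measure ℝ} {p β : ℝ → ℝ} (hp : AEMeasurable p μ)
    (hβ : AEMeasurable β μ) (cc ctil : ℝ) {d : ℕ} (φ : C(I01, Fin (d + 2) → ℝ)) :
    AEMeasurable (fun t => LdE p β cc ctil d t (xofN φ t) (vofN φ t)) μ :=
  ⟨_, measurable_LdE hp.measurable_mk hβ.measurable_mk cc ctil d (measurable_xofN φ)
      (measurable_vofN φ),
    by filter_upwards [hp.ae_eq_mk, hβ.ae_eq_mk] with t hpt hβt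
       exact LdE_congr_params p β cc ctil t hpt hβt⟩

end Measurability

section Jinf

variable (p β : ℝ → ℝ) {c : ℕ → ℝ} (cc ctil : ℝ) {x : ∀ j : ℕ, C(I01, Fin (j + 2) → ℝ)}

lemma Jinf_eq_top_of_notMem (hx : x ∉ GammaStar c) : Jinf p β c cc ctil x = ⊤ := by
  unfold Jinf
  split_ifs with hP
  · obtain ⟨d, hd⟩ : ∃ d, x d ∉ Gamma d c := by
      by_contra! h
      exact hx ⟨hP, h⟩
    exact top_le_iff.1 (le_iSup_of_le d (by rw [Irate, if_neg hd]))
  · rfl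

lemma Jinf_eq_iSup_lintegral (hx : x ∈ GammaStar c) :
    Jinf p β c cc ctil x = ⨆ d, ∫⁻ t in Icc (0 : ℝ) 1,
      erealToENNReal (LdE p β cc ctil d t (xofN (x d) t) (vofN (x d) t)) := by
  rw [Jinf, if_pos hx.1]
  exact iSup_congr fun d => if_pos (hx.2 d)

end Jinf

/-- **Proposition (identification of `J^∞`).**  `J^∞` diverges off `Γ*`; on `Γ*` the
integrand `L_d(p_d(φ(t)))` is nondecreasing in `d` for a.e. `t` (so the limit exists), and
`J^∞(φ) = ∫_0^1 lim_d L_d(p_d(φ(t))) dt`. -/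
theorem jinf_identification
    (p β : ℝ → ℝ) (p0 β0 β1 : ℝ) (hND : ND p β p0 β0 β1)
    (c : ℕ → ℝ) (cc ctil : ℝ) (hLIM : LIMc c cc ctil) :
    (∀ x : ∀ j : ℕ, C(I01, Fin (j+2) → ℝ), x ∉ GammaStar c → Jinf p β c cc ctil x = ⊤)
    ∧ ∀ x ∈ GammaStar c,
        (∀ᵐ t ∂(volume.restrict (Set.Icc (0:ℝ) 1)),
          Monotone fun d : ℕ => LdE p β cc ctil d t (xofN (x d) t) (vofN (x d) t))
        ∧ Jinf p β c cc ctil x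
            = ∫⁻ t in Set.Icc (0:ℝ) 1,
                ⨆ d : ℕ, erealToENNReal (LdE p β cc ctil d t (xofN (x d) t) (vofN (x d) t)) := by
  refine ⟨fun x => Jinf_eq_top_of_notMem p β cc ctil, fun x hx => ?_⟩
  have hmono := GammaStar.ae_monotone_LdE hND hLIM hx
  refine ⟨hmono, ?_⟩
  have hmeas d := (aemeasurable_LdE hND.p_pc.aemeasurable hND.β_pc.aemeasurable cc ctil
    (x d)).ereal_toENNReal
  rw [Jinf_eq_iSup_lintegral p β cc ctil hx, erealToENNReal_eq_toENNReal]
  refine (lintegral_iSup' hmeas ?_).symm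
  filter_upwards [hmono] with t ht d d' hdd'
  exact EReal.toENNReal_le_toENNReal (ht hdd')

end
end

section
/- Consider the controlled chain X̄^n with controls v_j^n equal to ν_0(ψ̇*(j/n)|j/n) when 0 ≤ j ≤ ⌊δn⌋, or when j ≥ ⌈δn⌉ and X̄^n_i(j) ≥ (θ/4)(e_iδ + c_i) for all 0 ≤ i ≤ d+1, and equal to the natural increment distribution ρ otherwise; let M^n(j) be the associated martingale M^n(j) := X̄^n(j) − (1/n)Σ_{l<j} Ē(Ȳ^n(l)|X̄^n(l)) − c^d, let τ_n := n ∧ min{⌈δn⌉ ≤ l ≤ n : X̄^n_i(l) < (θ/4)(e_iδ + c_i) for some 0 ≤ i ≤ d+1}, and let 𝔸_n := {sup_{0≤j≤n} |M^n(j∧τ_n)| > θe_{d+1}/(4n^{1/8})}. Then for all n ≥ δ^{−8}, on the event 𝔸_n^c one has τ_n = n. -/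
open MeasureTheory Real Set Filter Topology
open scoped ENNReal

noncomputable section

attribute [local instance] Classical.propDecidable

/-!
Before `τ_n` the control is always `ψ̇*`, so `X̄^n(τ_n) = c^d + (1/n) Σ_{l<τ_n} ψ̇*(l/n) + M^n(τ_n)`.
If `τ_n < n` then `τ_n ≥ δn`, and the lower bound on the Riemann sums of `ψ̇*` together with
`n^{-1/8} ≤ δ` give `X̄_i^n(τ_n) ≥ (θ/2)(e_iδ + c_i) - (θ/4) e_iδ ≥ (θ/4)(e_iδ + c_i)` for every
`i`, contradicting the definition of `τ_n`.
-/

section StoppedChain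

variable {d : ℕ} (γs : ℝ → Fin (d+2) → ℝ) (ρm : ℕ → Fin (d+2) → ℝ)
  (Xb : ℕ → Fin (d+2) → ℝ) (c : ℕ → ℝ) (e : Fin (d+2) → ℝ) (θ δ : ℝ) (n : ℕ)

theorem stopTau_le : stopTau Xb c e θ δ n ≤ n :=
  Nat.sInf_le (Or.inl rfl)

theorem stopTau_crosses_of_lt (h : stopTau Xb c e θ δ n < n) :
    ⌈δ * (n : ℝ)⌉₊ ≤ stopTau Xb c e θ δ n ∧
      ∃ i, Xb (stopTau Xb c e θ δ n) i < (θ/4) * (e i * δ + cvec d c i) := by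
  have hmem : stopTau Xb c e θ δ n ∈ ({n} ∪ {l : ℕ | ⌈δ * (n : ℝ)⌉₊ ≤ l ∧ l ≤ n
      ∧ ∃ i, Xb l i < (θ/4) * (e i * δ + cvec d c i)} : Set ℕ) :=
    Nat.sInf_mem ⟨n, Or.inl rfl⟩
  rcases hmem with hn | ⟨hceil, -, hcross⟩
  · exact absurd hn h.ne
  · exact ⟨hceil, hcross⟩

theorem ctrlMean_of_lt_stopTau {l : ℕ} (hl : l < stopTau Xb c e θ δ n) :
    ctrlMean γs ρm Xb c e θ δ n l = γs ((l : ℝ) / n) := by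
  refine if_pos ?_
  rcases le_or_gt l ⌊δ * (n : ℝ)⌋₊ with hfloor | hfloor
  · exact Or.inl hfloor
  have hceil : ⌈δ * (n : ℝ)⌉₊ ≤ l := (Nat.ceil_le_floor_add_one _).trans hfloor
  have hln : l ≤ n := hl.le.trans (stopTau_le Xb c e θ δ n)
  exact Or.inr ⟨hceil, fun i => not_lt.mp fun hi =>
    hl.not_ge (Nat.sInf_le (Or.inr ⟨hceil, hln, i, hi⟩))⟩

theorem ctrlMart_of_le_stopTau {j : ℕ} (hj : j ≤ stopTau Xb c e θ δ n) (i : Fin (d+2)) :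
    ctrlMart γs ρm Xb c e θ δ n j i
      = Xb j i - (1/(n : ℝ)) * ∑ l ∈ Finset.range j, γs ((l : ℝ) / n) i - cvec d c i := by
  rw [ctrlMart, Finset.sum_congr rfl fun l hl => congrFun
    (ctrlMean_of_lt_stopTau γs ρm Xb c e θ δ n ((Finset.mem_range.mp hl).trans_le hj)) i]

end StoppedChain

theorem abs_le_l1norm {d : ℕ} (v : Fin (d+2) → ℝ) (i : Fin (d+2)) : |v i| ≤ l1norm v :=
  Finset.single_le_sum (f := fun j => |v j|) (fun j _ => abs_nonneg (v j)) (Finset.mem_univ i)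

theorem cvec_nonneg {c : ℕ → ℝ} (hc : ∀ k, 0 ≤ c k) (d : ℕ) (i : Fin (d+2)) :
    0 ≤ cvec d c i := by
  unfold cvec
  split
  · exact hc _
  · exact tsum_nonneg fun _ => hc _

theorem inv_rpow_le_of_inv_pow_le {δ x : ℝ} {k : ℕ} (hδ : 0 < δ) (hk : k ≠ 0)
    (h : δ⁻¹ ^ k ≤ x) : (x ^ ((1 : ℝ) / k))⁻¹ ≤ δ := by
  have hroot : δ⁻¹ ≤ x ^ ((1 : ℝ) / k) := by
    calc δ⁻¹ = (δ⁻¹ ^ k) ^ ((1 : ℝ) / k) := by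
          rw [← Real.rpow_natCast, ← Real.rpow_mul (by positivity), mul_one_div_cancel
            (Nat.cast_ne_zero.mpr hk), Real.rpow_one]
      _ ≤ x ^ ((1 : ℝ) / k) := Real.rpow_le_rpow (by positivity) h (by positivity)
  simpa using inv_anti₀ (by positivity) hroot

theorem stopping_time_equals_n_general
    (c : ℕ → ℝ) (cc ctil : ℝ) (hLIM : LIMc c cc ctil) (d : ℕ)
    (φstar : C(I01, Fin (d+2) → ℝ))
    (e : Fin (d+2) → ℝ) (he : ∀ i, 0 < e i)
    (helast : ∀ i, e (Fin.last (d+1)) ≤ e i)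
    (ℓC : C(I01, Fin (d+2) → ℝ))
    (θ : ℝ) (hθ0 : 0 < θ) (κ : ℕ)
    (δ : ℝ) (hδ0 : 0 < δ)
    (n : ℕ) (hn : δ⁻¹ ^ (8 : ℕ) ≤ (n : ℝ))
    (hLB : ∀ j : ℕ, ⌊δ * (n : ℝ)⌋₊ ≤ j → j ≤ n → ∀ i : Fin (d+2),
      (θ/2) * (e i * ((j : ℝ)/(n : ℝ)) + cvec d c i)
        ≤ (1/(n : ℝ)) * ∑ l ∈ Finset.range j,
            gammaStarFull φstar ℓC θ κ c δ ((l : ℝ)/(n : ℝ)) i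
          + cvec d c i)
    (Xb : ℕ → Fin (d+2) → ℝ)
    (ρm : ℕ → Fin (d+2) → ℝ)
    (hM : ∀ j ≤ n,
      l1norm (ctrlMart (gammaStarFull φstar ℓC θ κ c δ) ρm Xb c e θ δ n
          (min j (stopTau Xb c e θ δ n)))
        ≤ θ * e (Fin.last (d+1)) / (4 * (n : ℝ) ^ ((1 : ℝ)/8))) :
    stopTau Xb c e θ δ n = n := by
  set γs := gammaStarFull φstar ℓC θ κ c δ
  refine (stopTau_le Xb c e θ δ n).eq_or_lt.resolve_right fun hτn => ?_
  obtain ⟨hτceil, i, hcross⟩ := stopTau_crosses_of_lt Xb c e θ δ n hτn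
  set τ := stopTau Xb c e θ δ n
  have hn0 : (0 : ℝ) < n := (by positivity : (0 : ℝ) < δ⁻¹ ^ 8).trans_le hn
  have hδτ : δ ≤ (τ : ℝ) / n := (le_div_iff₀ hn0).mpr (Nat.ceil_le.mp hτceil)
  have hmart : |Xb τ i - (1/(n : ℝ)) * ∑ l ∈ Finset.range τ, γs ((l : ℝ) / n) i - cvec d c i|
      ≤ θ * e (Fin.last (d+1)) / (4 * (n : ℝ) ^ ((1 : ℝ)/8)) := by
    rw [← ctrlMart_of_le_stopTau γs ρm Xb c e θ δ n le_rfl i]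
    simpa using (abs_le_l1norm _ i).trans (hM τ hτn.le)
  have hnoise : θ * e (Fin.last (d+1)) / (4 * (n : ℝ) ^ ((1 : ℝ)/8)) ≤ θ/4 * (e i * δ) := by
    have hroot : ((n : ℝ) ^ ((1 : ℝ)/8))⁻¹ ≤ δ := by
      simpa using inv_rpow_le_of_inv_pow_le (k := 8) hδ0 (by norm_num) hn
    calc θ * e (Fin.last (d+1)) / (4 * (n : ℝ) ^ ((1 : ℝ)/8))
        = θ/4 * (e (Fin.last (d+1)) * ((n : ℝ) ^ ((1 : ℝ)/8))⁻¹) := by ring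
      _ ≤ θ/4 * (e i * δ) := by
        gcongr
        exacts [(he i).le, helast i]
  have hdrift : θ/2 * (e i * δ) ≤ θ/2 * (e i * ((τ : ℝ) / n)) :=
    mul_le_mul_of_nonneg_left (mul_le_mul_of_nonneg_left hδτ (he i).le) (by positivity)
  have hsum := hLB τ ((Nat.floor_le_ceil _).trans hτceil) hτn.le i
  have hc := mul_nonneg hθ0.le (cvec_nonneg hLIM.nonneg d i)
  linarith [abs_le.mp hmart]

/-- **Lemma (`τ_n = n` on `𝔸_n^c`).**  For `n ≥ δ^{-8}`, if the stopped martingale of the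
controlled chain built from `ψ*` satisfies
`sup_{0≤j≤n} |M^n(j ∧ τ_n)| ≤ θ e_{d+1}/(4 n^{1/8})` (the event `𝔸_n^c`), then `τ_n = n`. -/
theorem stopping_time_equals_n
    (c : ℕ → ℝ) (cc ctil : ℝ) (hLIM : LIMc c cc ctil) (d : ℕ)
    (φstar : C(I01, Fin (d+2) → ℝ)) (hφ : φstar ∈ Gamma d c)
    (e : Fin (d+2) → ℝ) (he : ∀ i, 0 < e i) (hes : ∑ i, e i = 1)
    (hie : ∑ i : Fin (d+2), ((i : ℕ) : ℝ) * e i ≤ 1)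
    (helast : ∀ i, e (Fin.last (d+1)) ≤ e i)
    (ℓC : C(I01, Fin (d+2) → ℝ))
    (hℓ : ∀ (t : I01) (i : Fin (d+2)), ℓC t i = e i * (t : ℝ) + cvec d c i)
    (θ : ℝ) (hθ0 : 0 < θ) (hθ1 : θ ≤ 1) (κ : ℕ) (hκ : 1 ≤ κ)
    (δ : ℝ) (hδ0 : 0 < δ) (hδ1 : δ ≤ 1)
    (n : ℕ) (hn : δ⁻¹ ^ (8 : ℕ) ≤ (n : ℝ))
    (hLB : ∀ j : ℕ, ⌊δ * (n : ℝ)⌋₊ ≤ j → j ≤ n → ∀ i : Fin (d+2),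
      (θ/2) * (e i * ((j : ℝ)/(n : ℝ)) + cvec d c i)
        ≤ (1/(n : ℝ)) * ∑ l ∈ Finset.range j,
            gammaStarFull φstar ℓC θ κ c δ ((l : ℝ)/(n : ℝ)) i
          + cvec d c i)
    (Xb : ℕ → Fin (d+2) → ℝ) (hX0 : Xb 0 = cvec d c)
    (ρm : ℕ → Fin (d+2) → ℝ)
    (hM : ∀ j ≤ n,
      l1norm (ctrlMart (gammaStarFull φstar ℓC θ κ c δ) ρm Xb c e θ δ n
          (min j (stopTau Xb c e θ δ n)))
        ≤ θ * e (Fin.last (d+1)) / (4 * (n : ℝ) ^ ((1 : ℝ)/8))) :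
    stopTau Xb c e θ δ n = n :=
  stopping_time_equals_n_general c cc ctil hLIM d φstar e he helast ℓC θ hθ0 κ δ hδ0 n hn hLB Xb ρm
    hM

end
end
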